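/- arXiv:2404.10961 — 4 statements merged into one kernel-verified Lean document; each statement's English description precedes it below -/
import Mathlib

section
/- Let G = (L, R, E) be a bipartite graph with a probability distribution on edges, let ε, β > 0, k ∈ ℕ, and f : L → [0,1] with mean μ. Suppose D is a distribution on tuples (v₁,…,v_k, u) ∈ L^k × R such that (1) for every i, the marginal of (v_i, u) equals the edge distribution of G, and (2) Pr_D[(1/k)∑_{i=1}^k f(v_i) > μ + ε] ≤ β. Then Pr_{u ∼ R}[E_{v ∼ u}[f(v)] > μ + 2ε] ≤ β/ε, where E_{v∼u} is expectation over a random neighbor of u. The analogous statement holds for the lower tail. -/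
open Finset
open scoped Classical

/-- Let `G = (L,R,E)` be a bipartite graph with an edge distribution `W`,
`f : L → [0,1]` with mean `μ`, and let `D` be a distribution on tuples
`(v₁,…,v_k, u) ∈ L^k × R` each of whose pair-marginals `(v_i, u)` equals the edge
distribution.  If the average `(1/k)∑ f(v_i)` exceeds `μ + ε` with probability at most `β`
under `D`, then the probability over `u ∼ R` that the average of `f` over a random neighbor
of `u` exceeds `μ + 2ε` is at most `β/ε`; and analogously for the lower tail. -/
theorem stmt_5 {L R : Type*} [Fintype L] [Fintype R]
    (W : L → R → ℝ) (hW0 : ∀ v u, 0 ≤ W v u) (hW1 : (∑ v, ∑ u, W v u) = 1)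
    (k : ℕ) (hk : 0 < k) (ε β : ℝ) (hε : 0 < ε) (hβ : 0 < β)
    (f : L → ℝ) (hf0 : ∀ v, 0 ≤ f v) (hf1 : ∀ v, f v ≤ 1)
    (μ : ℝ) (hμ : (∑ v, (∑ u, W v u) * f v) = μ)
    (D : (Fin k → L) × R → ℝ) (hD0 : ∀ x, 0 ≤ D x) (hD1 : (∑ x, D x) = 1)
    (hmarg : ∀ (i : Fin k) (a : L) (b : R),
      (∑ x ∈ univ.filter (fun x : (Fin k → L) × R => x.1 i = a ∧ x.2 = b), D x) = W a b) :
    ((∑ x ∈ univ.filter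
        (fun x : (Fin k → L) × R => μ + ε < (∑ i, f (x.1 i)) / (k : ℝ)), D x) ≤ β →
      (∑ u ∈ univ.filter
        (fun u : R => μ + 2 * ε < (∑ v, W v u * f v) / (∑ v, W v u)), (∑ v, W v u)) ≤ β / ε) ∧
    ((∑ x ∈ univ.filter
        (fun x : (Fin k → L) × R => (∑ i, f (x.1 i)) / (k : ℝ) < μ - ε), D x) ≤ β →
      (∑ u ∈ univ.filter
        (fun u : R => (∑ v, W v u * f v) / (∑ v, W v u) < μ - 2 * ε), (∑ v, W v u)) ≤ β / ε) := by
  set S : (Fin k → L) × R → ℝ := fun x => (∑ i, f (x.1 i)) / (k : ℝ) with hS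
  have hkR : (0 : ℝ) < (k : ℝ) := by exact_mod_cast hk
  have hS0 : ∀ x, 0 ≤ S x := fun x =>
    div_nonneg (Finset.sum_nonneg fun i _ => hf0 _) hkR.le
  have hS1 : ∀ x, S x ≤ 1 := by
    intro x
    rw [hS, div_le_one hkR]
    calc (∑ i, f (x.1 i)) ≤ ∑ i : Fin k, 1 := Finset.sum_le_sum fun i _ => hf1 _
    _ = (k : ℝ) := by simp
  set p : R → ℝ := fun u => ∑ v, W v u with hp
  have hp0 : ∀ u, 0 ≤ p u := fun u => Finset.sum_nonneg fun v _ => hW0 v u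
  have i0 : Fin k := ⟨0, hk⟩
  -- conditional mass
  have hA : ∀ u, (∑ x ∈ univ.filter (fun x : (Fin k → L) × R => x.2 = u), D x) = p u := by
    intro u
    rw [← Finset.sum_fiberwise (univ.filter (fun x : (Fin k → L) × R => x.2 = u))
      (fun x => x.1 i0) D]
    refine Finset.sum_congr rfl fun a _ => ?_
    rw [← hmarg i0 a u]
    congr 1
    rw [Finset.filter_filter]
    exact Finset.filter_congr fun x _ => by tauto
  -- conditional expectation
  have hB : ∀ u, (∑ x ∈ univ.filter (fun x : (Fin k → L) × R => x.2 = u), D x * S x)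
      = ∑ v, W v u * f v := by
    intro u
    have key : ∀ i : Fin k,
        (∑ x ∈ univ.filter (fun x : (Fin k → L) × R => x.2 = u), D x * f (x.1 i))
        = ∑ v, W v u * f v := by
      intro i
      rw [← Finset.sum_fiberwise (univ.filter (fun x : (Fin k → L) × R => x.2 = u))
        (fun x => x.1 i) (fun x => D x * f (x.1 i))]
      refine Finset.sum_congr rfl fun a _ => ?_
      have : ∀ x ∈ (univ.filter (fun x : (Fin k → L) × R => x.2 = u)).filter
          (fun x => x.1 i = a), D x * f (x.1 i) = D x * f a := by
        intro x hx
        simp only [Finset.mem_filter] at hx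
        rw [hx.2]
      rw [Finset.sum_congr rfl this, ← Finset.sum_mul]
      rw [show ((univ.filter (fun x : (Fin k → L) × R => x.2 = u)).filter
          (fun x => x.1 i = a)) = univ.filter (fun x : (Fin k → L) × R => x.1 i = a ∧ x.2 = u) by
        rw [Finset.filter_filter]; exact Finset.filter_congr fun x _ => by tauto]
      rw [hmarg i a u]
    calc (∑ x ∈ univ.filter (fun x : (Fin k → L) × R => x.2 = u), D x * S x)
        = (∑ x ∈ univ.filter (fun x : (Fin k → L) × R => x.2 = u),
            (∑ i, D x * f (x.1 i)) / (k : ℝ)) := by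
          refine Finset.sum_congr rfl fun x _ => ?_
          rw [hS]; rw [← Finset.mul_sum]; ring
      _ = (∑ i : Fin k, ∑ x ∈ univ.filter (fun x : (Fin k → L) × R => x.2 = u),
            D x * f (x.1 i)) / (k : ℝ) := by
          rw [← Finset.sum_div, Finset.sum_comm]
      _ = ∑ v, W v u * f v := by
          rw [Finset.sum_congr rfl fun i _ => key i, Finset.sum_const, Finset.card_univ,
            Fintype.card_fin, nsmul_eq_mul]
          field_simp
  have hμ0 : 0 ≤ μ := by
    rw [← hμ]
    exact Finset.sum_nonneg fun v _ => mul_nonneg (Finset.sum_nonneg fun u _ => hW0 v u) (hf0 v)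
  have hμ1 : μ ≤ 1 := by
    rw [← hμ, ← hW1]
    exact Finset.sum_le_sum fun v _ => by
      have h1 : (∑ u, W v u) * f v ≤ (∑ u, W v u) * 1 :=
        mul_le_mul_of_nonneg_left (hf1 v) (Finset.sum_nonneg fun u _ => hW0 v u)
      simpa using h1
  -- generic fiber sum bound
  have fiber_bound : ∀ (T : Finset ((Fin k → L) × R)) (B : Finset R),
      (∑ u ∈ B, ∑ x ∈ T.filter (fun x => x.2 = u), D x) ≤ ∑ x ∈ T, D x := by
    intro T B
    calc (∑ u ∈ B, ∑ x ∈ T.filter (fun x => x.2 = u), D x)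
        ≤ ∑ u : R, ∑ x ∈ T.filter (fun x => x.2 = u), D x := by
          refine Finset.sum_le_sum_of_subset_of_nonneg (Finset.subset_univ B) fun u _ _ =>
            Finset.sum_nonneg fun x _ => hD0 x
      _ = ∑ x ∈ T, D x := Finset.sum_fiberwise T (fun x => x.2) D
  constructor
  · -- upper tail
    intro hβ'
    set T := univ.filter (fun x : (Fin k → L) × R => μ + ε < S x) with hT
    set q : R → ℝ := fun u => ∑ x ∈ T.filter (fun x => x.2 = u), D x with hq
    have hq0 : ∀ u, 0 ≤ q u := fun u => Finset.sum_nonneg fun x _ => hD0 x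
    set B := univ.filter (fun u : R => μ + 2 * ε < (∑ v, W v u * f v) / p u) with hBdef
    have claim : ∀ u ∈ B, ε * p u ≤ q u := by
      intro u hu
      rcases eq_or_lt_of_le (hp0 u) with h0 | hpos
      · rw [← h0, mul_zero]; exact hq0 u
      · simp only [hBdef, Finset.mem_filter] at hu
        have hm : (μ + 2 * ε) * p u < ∑ v, W v u * f v := (lt_div_iff₀ hpos).mp hu.2
        -- split conditional expectation
        have hsplit := Finset.sum_filter_add_sum_filter_not
          (univ.filter (fun x : (Fin k → L) × R => x.2 = u))
          (fun x => μ + ε < S x) (fun x => D x * S x)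
        have hsplitD := Finset.sum_filter_add_sum_filter_not
          (univ.filter (fun x : (Fin k → L) × R => x.2 = u))
          (fun x => μ + ε < S x) D
        have hset : (univ.filter (fun x : (Fin k → L) × R => x.2 = u)).filter
            (fun x => μ + ε < S x) = T.filter (fun x => x.2 = u) := by
          rw [Finset.filter_filter, hT, Finset.filter_filter]
          exact Finset.filter_congr fun x _ => by tauto
        set Tc := (univ.filter (fun x : (Fin k → L) × R => x.2 = u)).filter
          (fun x => ¬ (μ + ε < S x)) with hTc
        have h1 : (∑ x ∈ T.filter (fun x => x.2 = u), D x * S x) ≤ q u := by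
          rw [hq]
          exact Finset.sum_le_sum fun x _ => by
            have := hS1 x; nlinarith [hD0 x, hS1 x]
        have h2 : (∑ x ∈ Tc, D x * S x) ≤ (μ + ε) * ∑ x ∈ Tc, D x := by
          rw [Finset.mul_sum]
          refine Finset.sum_le_sum fun x hx => ?_
          simp only [hTc, Finset.mem_filter, not_lt] at hx
          nlinarith [hD0 x, hx.2]
        have hDc : (∑ x ∈ Tc, D x) = p u - q u := by
          rw [hset] at hsplitD; rw [hA u] at hsplitD
          have hqq : q u = ∑ x ∈ T.filter (fun x => x.2 = u), D x := rfl
          linarith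
        have hBu : (∑ v, W v u * f v)
            ≤ q u + (μ + ε) * (p u - q u) := by
          rw [← hB u, ← hsplit, hset]
          rw [hDc] at h2
          linarith
        nlinarith [hq0 u, mul_nonneg (hq0 u) (by linarith : (0:ℝ) ≤ μ + ε)]
    have hsum : ε * (∑ u ∈ B, p u) ≤ β := by
      rw [Finset.mul_sum]
      calc (∑ u ∈ B, ε * p u) ≤ ∑ u ∈ B, q u := Finset.sum_le_sum claim
        _ ≤ ∑ x ∈ T, D x := fiber_bound T B
        _ ≤ β := hβ'
    rw [le_div_iff₀ hε]; linarith [hsum]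
  · -- lower tail
    intro hβ'
    set T := univ.filter (fun x : (Fin k → L) × R => S x < μ - ε) with hT
    set q : R → ℝ := fun u => ∑ x ∈ T.filter (fun x => x.2 = u), D x with hq
    have hq0 : ∀ u, 0 ≤ q u := fun u => Finset.sum_nonneg fun x _ => hD0 x
    set B := univ.filter (fun u : R => (∑ v, W v u * f v) / p u < μ - 2 * ε) with hBdef
    have claim : ∀ u ∈ B, ε * p u ≤ q u := by
      intro u hu
      rcases eq_or_lt_of_le (hp0 u) with h0 | hpos
      · rw [← h0, mul_zero]; exact hq0 u
      · simp only [hBdef, Finset.mem_filter] at hu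
        have hm : (∑ v, W v u * f v) < (μ - 2 * ε) * p u := (div_lt_iff₀ hpos).mp hu.2
        have hsplit := Finset.sum_filter_add_sum_filter_not
          (univ.filter (fun x : (Fin k → L) × R => x.2 = u))
          (fun x => S x < μ - ε) (fun x => D x * S x)
        have hsplitD := Finset.sum_filter_add_sum_filter_not
          (univ.filter (fun x : (Fin k → L) × R => x.2 = u))
          (fun x => S x < μ - ε) D
        have hset : (univ.filter (fun x : (Fin k → L) × R => x.2 = u)).filter
            (fun x => S x < μ - ε) = T.filter (fun x => x.2 = u) := by
          rw [Finset.filter_filter, hT, Finset.filter_filter]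
          exact Finset.filter_congr fun x _ => by tauto
        set Tc := (univ.filter (fun x : (Fin k → L) × R => x.2 = u)).filter
          (fun x => ¬ (S x < μ - ε)) with hTc
        have h1 : (0:ℝ) ≤ ∑ x ∈ T.filter (fun x => x.2 = u), D x * S x :=
          Finset.sum_nonneg fun x _ => mul_nonneg (hD0 x) (hS0 x)
        have h2 : (μ - ε) * ∑ x ∈ Tc, D x ≤ ∑ x ∈ Tc, D x * S x := by
          rw [Finset.mul_sum]
          refine Finset.sum_le_sum fun x hx => ?_
          simp only [hTc, Finset.mem_filter, not_lt] at hx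
          nlinarith [hD0 x, hx.2]
        have hDc : (∑ x ∈ Tc, D x) = p u - q u := by
          rw [hset] at hsplitD; rw [hA u] at hsplitD
          have hqq : q u = ∑ x ∈ T.filter (fun x => x.2 = u), D x := rfl
          linarith
        have hBu : (μ - ε) * (p u - q u) ≤ ∑ v, W v u * f v := by
          rw [← hB u, ← hsplit, hset]
          rw [hDc] at h2
          linarith
        nlinarith [hq0 u, mul_nonneg (hq0 u) (by linarith : (0:ℝ) ≤ 1 - μ + ε)]
    have hsum : ε * (∑ u ∈ B, p u) ≤ β := by
      rw [Finset.mul_sum]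
      calc (∑ u ∈ B, ε * p u) ≤ ∑ u ∈ B, q u := Finset.sum_le_sum claim
        _ ≤ ∑ x ∈ T, D x := fiber_bound T B
        _ ≤ β := hβ'
    rw [le_div_iff₀ hε]; linarith [hsum]
end

section
/- Let β, δ > 0, δ' > δ, and α < min{δ, 1/2}/(1+δ). If G = (L, R, E) is an (α, β, δ)-multiplicative sampler, then the opposite graph G_op = (R, L, E) is a ((1 - α(1+δ))/(α(δ'-δ)) · β, 2α, δ')-multiplicative sampler. -/
open Finset
open scoped Classical

set_option maxHeartbeats 1000000

private lemma aux_main {L R : Type*} [Fintype L] [Fintype R]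
    (W : L → R → ℝ) (hW0 : ∀ v u, 0 ≤ W v u) (B G : Finset L) (A : Finset R) (β δ : ℝ)
    (hGβ : (∑ v ∈ B \ G, (∑ u, W v u)) ≤ β)
    (hgood : ∀ v ∈ G,
      (∑ u ∈ A, W v u) ≤ (1 + δ) * (∑ u ∈ A, (∑ v', W v' u)) * (∑ u, W v u) ∧
      (1 - δ) * (∑ u ∈ A, (∑ v', W v' u)) * (∑ u, W v u) ≤ (∑ u ∈ A, W v u)) :
    ∃ b : ℝ, 0 ≤ b ∧ b ≤ β ∧
      (∑ v ∈ B, ∑ u ∈ A, W v u) ≤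
        (1 + δ) * (∑ u ∈ A, (∑ v', W v' u)) * ((∑ v ∈ B, ∑ u, W v u) - b) + b ∧
      (1 - δ) * (∑ u ∈ A, (∑ v', W v' u)) * ((∑ v ∈ B, ∑ u, W v u) - b) ≤
        (∑ v ∈ B, ∑ u ∈ A, W v u) := by
  classical
  have hm0 : ∀ v : L, (0:ℝ) ≤ ∑ u, W v u := fun v => sum_nonneg fun u _ => hW0 v u
  have hP0 : ∀ v : L, (0:ℝ) ≤ ∑ u ∈ A, W v u := fun v => sum_nonneg fun u _ => hW0 v u
  have hPm : ∀ v : L, (∑ u ∈ A, W v u) ≤ ∑ u, W v u :=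
    fun v => sum_le_sum_of_subset_of_nonneg (subset_univ A) fun u _ _ => hW0 v u
  have hBsplit : B \ (B ∩ G) = B \ G := sdiff_inter_self_left B G
  have hsub : B ∩ G ⊆ B := inter_subset_left
  have hsplitm := Finset.sum_sdiff (f := fun v => ∑ u, W v u) hsub
  have hsplitP := Finset.sum_sdiff (f := fun v => ∑ u ∈ A, W v u) hsub
  rw [hBsplit] at hsplitm hsplitP
  refine ⟨∑ v ∈ B \ G, ∑ u, W v u, sum_nonneg fun v _ => hm0 v, hGβ, ?_, ?_⟩
  · have h1 : (∑ v ∈ B \ G, ∑ u ∈ A, W v u) ≤ ∑ v ∈ B \ G, ∑ u, W v u :=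
      sum_le_sum fun v _ => hPm v
    have h2 : (∑ v ∈ B ∩ G, ∑ u ∈ A, W v u) ≤
        (1 + δ) * (∑ u ∈ A, (∑ v', W v' u)) * (∑ v ∈ B ∩ G, ∑ u, W v u) := by
      rw [mul_sum]
      exact sum_le_sum fun v hv => (hgood v (mem_inter.mp hv).2).1
    have h3 : (∑ v ∈ B ∩ G, ∑ u, W v u) =
        (∑ v ∈ B, ∑ u, W v u) - ∑ v ∈ B \ G, ∑ u, W v u := by linarith
    rw [h3] at h2
    linarith
  · have h1 : (0:ℝ) ≤ ∑ v ∈ B \ G, ∑ u ∈ A, W v u := sum_nonneg fun v _ => hP0 v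
    have h2 : (1 - δ) * (∑ u ∈ A, (∑ v', W v' u)) * (∑ v ∈ B ∩ G, ∑ u, W v u) ≤
        (∑ v ∈ B ∩ G, ∑ u ∈ A, W v u) := by
      rw [mul_sum]
      exact sum_le_sum fun v hv => (hgood v (mem_inter.mp hv).2).2
    have h3 : (∑ v ∈ B ∩ G, ∑ u, W v u) =
        (∑ v ∈ B, ∑ u, W v u) - ∑ v ∈ B \ G, ∑ u, W v u := by linarith
    rw [h3] at h2
    linarith

/-- If the weighted bipartite graph `G = (L,R,E)` (given by its edge
distribution `W`) is an `(α, β, δ)`-multiplicative sampler, with `δ' > δ` and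
`α < min{δ, 1/2}/(1+δ)`, then the opposite graph `G_op = (R,L,E)` is a
`((1 - α(1+δ))/(α(δ'-δ)) · β, 2α, δ')`-multiplicative sampler.
Here for `v ∈ L`, `Pr_{u∼v}[A] = (∑ u ∈ A, W v u)/(∑ u, W v u)`, and the measures on
`L` and `R` are the marginals of `W`. -/
theorem stmt_6 {L R : Type*} [Fintype L] [Fintype R]
    (W : L → R → ℝ) (hW0 : ∀ v u, 0 ≤ W v u) (hW1 : (∑ v, ∑ u, W v u) = 1)
    (α β δ δ' : ℝ) (hβ : 0 < β) (hδ : 0 < δ) (hδ' : δ < δ')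
    (hα0 : 0 < α) (hα : α < min δ (1/2) / (1 + δ))
    (hsamp : ∀ A : Finset R, α ≤ (∑ u ∈ A, (∑ v, W v u)) →
      (∑ v ∈ univ.filter (fun v : L =>
          δ * (∑ u ∈ A, (∑ v', W v' u)) <
            |(∑ u ∈ A, W v u) / (∑ u, W v u) - (∑ u ∈ A, (∑ v', W v' u))|),
        (∑ u, W v u)) ≤ β) :
    ∀ B : Finset L, (1 - α * (1 + δ)) / (α * (δ' - δ)) * β ≤ (∑ v ∈ B, (∑ u, W v u)) →
      (∑ u ∈ univ.filter (fun u : R =>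
          δ' * (∑ v ∈ B, (∑ u', W v u')) <
            |(∑ v ∈ B, W v u) / (∑ v, W v u) - (∑ v ∈ B, (∑ u', W v u'))|),
        (∑ v, W v u)) ≤ 2 * α := by
  intro B hB
  have h1δ : (0:ℝ) < 1 + δ := by linarith
  have hαδ : α * (1 + δ) < min δ (1/2) := (lt_div_iff₀ h1δ).mp hα
  have hαhalf : α * (1 + δ) < 1/2 := lt_of_lt_of_le hαδ (min_le_right _ _)
  have h2α : 2 * α < 1 := by nlinarith [mul_nonneg hα0.le hδ.le]
  have hδ'δ : (0:ℝ) < δ' - δ := by linarith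
  have hαδ'δ : (0:ℝ) < α * (δ' - δ) := mul_pos hα0 hδ'δ
  have hmB : (0:ℝ) < ∑ v ∈ B, ∑ u, W v u := by
    have h0 : (0:ℝ) < (1 - α * (1 + δ)) / (α * (δ' - δ)) * β :=
      mul_pos (div_pos (by linarith) hαδ'δ) hβ
    exact lt_of_lt_of_le h0 hB
  have hB' : (1 - α * (1 + δ)) * β ≤ (∑ v ∈ B, ∑ u, W v u) * (α * (δ' - δ)) := by
    rw [div_mul_eq_mul_div, div_le_iff₀ hαδ'δ] at hB
    exact hB
  have hw0 : ∀ u : R, (0:ℝ) ≤ ∑ v, W v u := fun u => sum_nonneg fun v _ => hW0 v u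
  have hnB0 : ∀ u : R, (0:ℝ) ≤ ∑ v ∈ B, W v u := fun u => sum_nonneg fun v _ => hW0 v u
  have hnBw : ∀ u : R, (∑ v ∈ B, W v u) ≤ ∑ v, W v u :=
    fun u => sum_le_sum_of_subset_of_nonneg (subset_univ B) fun v _ _ => hW0 v u
  -- main consequence of the sampler property
  have main : ∀ A : Finset R, α ≤ (∑ u ∈ A, (∑ v, W v u)) →
      ∃ b : ℝ, 0 ≤ b ∧ b ≤ β ∧
        (∑ v ∈ B, ∑ u ∈ A, W v u) ≤
          (1 + δ) * (∑ u ∈ A, (∑ v', W v' u)) * ((∑ v ∈ B, ∑ u, W v u) - b) + b ∧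
        (1 - δ) * (∑ u ∈ A, (∑ v', W v' u)) * ((∑ v ∈ B, ∑ u, W v u) - b) ≤
          (∑ v ∈ B, ∑ u ∈ A, W v u) := by
    intro A hA
    have hsA := hsamp A hA
    refine aux_main W hW0 B
      (univ \ univ.filter (fun v : L =>
        δ * (∑ u ∈ A, (∑ v', W v' u)) <
          |(∑ u ∈ A, W v u) / (∑ u, W v u) - (∑ u ∈ A, (∑ v', W v' u))|)) A β δ ?_ ?_
    · refine le_trans (sum_le_sum_of_subset_of_nonneg ?_ fun v _ _ =>
        sum_nonneg fun u _ => hW0 v u) hsA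
      intro v hv
      rw [mem_sdiff] at hv
      by_contra hvF
      exact hv.2 (mem_sdiff.mpr ⟨mem_univ v, hvF⟩)
    · intro v hv
      have hnF := (mem_sdiff.mp hv).2
      have habs : |(∑ u ∈ A, W v u) / (∑ u, W v u) - (∑ u ∈ A, (∑ v', W v' u))| ≤
          δ * (∑ u ∈ A, (∑ v', W v' u)) := by
        by_contra h
        push_neg at h
        exact hnF (mem_filter.mpr ⟨mem_univ v, h⟩)
      obtain ⟨hl, hr⟩ := abs_le.mp habs
      have hm0v : (0:ℝ) ≤ ∑ u, W v u := sum_nonneg fun u _ => hW0 v u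
      rcases hm0v.eq_or_lt with h0 | hpos
      · have hP : (∑ u ∈ A, W v u) = 0 := by
          have h1 : (∑ u ∈ A, W v u) ≤ ∑ u, W v u :=
            sum_le_sum_of_subset_of_nonneg (subset_univ A) fun u _ _ => hW0 v u
          have h2 : (0:ℝ) ≤ ∑ u ∈ A, W v u := sum_nonneg fun u _ => hW0 v u
          linarith [h0]
        rw [hP, ← h0]
        constructor <;> simp
      · constructor
        · have h1 : (∑ u ∈ A, W v u) / (∑ u, W v u) ≤
              (1 + δ) * (∑ u ∈ A, (∑ v', W v' u)) := by linarith
          have h2 := mul_le_mul_of_nonneg_right h1 hpos.le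
          rw [div_mul_cancel₀ _ (ne_of_gt hpos)] at h2
          exact h2
        · have h1 : (1 - δ) * (∑ u ∈ A, (∑ v', W v' u)) ≤
              (∑ u ∈ A, W v u) / (∑ u, W v u) := by linarith
          have h2 := mul_le_mul_of_nonneg_right h1 hpos.le
          rw [div_mul_cancel₀ _ (ne_of_gt hpos)] at h2
          exact h2
  -- the upward-deviating set has measure < α
  have hup : (∑ u ∈ univ.filter (fun u : R =>
      δ' * (∑ v ∈ B, (∑ u', W v u')) <
        (∑ v ∈ B, W v u) / (∑ v, W v u) - (∑ v ∈ B, (∑ u', W v u'))), (∑ v, W v u)) < α := by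
    by_contra hcon
    push_neg at hcon
    obtain ⟨b, hb0, hbβ, hupper, -⟩ := main _ hcon
    have hpred : ∀ u ∈ univ.filter (fun u : R =>
        δ' * (∑ v ∈ B, (∑ u', W v u')) <
          (∑ v ∈ B, W v u) / (∑ v, W v u) - (∑ v ∈ B, (∑ u', W v u'))),
        (0:ℝ) < (∑ v, W v u) →
        (1 + δ') * (∑ v ∈ B, ∑ u', W v u') * (∑ v, W v u) < ∑ v ∈ B, W v u := by
      intro u hu hwu
      have h := (mem_filter.mp hu).2
      have h2 : (1 + δ') * (∑ v ∈ B, ∑ u', W v u') < (∑ v ∈ B, W v u) / (∑ v, W v u) := by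
        linarith
      exact (lt_div_iff₀ hwu).mp h2
    have hex : ∃ u ∈ univ.filter (fun u : R =>
        δ' * (∑ v ∈ B, (∑ u', W v u')) <
          (∑ v ∈ B, W v u) / (∑ v, W v u) - (∑ v ∈ B, (∑ u', W v u'))),
        (0:ℝ) < ∑ v, W v u := by
      apply Finset.exists_lt_of_sum_lt
      rw [sum_const_zero]
      exact lt_of_lt_of_le hα0 hcon
    have hstrict : (1 + δ') * (∑ v ∈ B, ∑ u, W v u) *
        (∑ u ∈ univ.filter (fun u : R =>
          δ' * (∑ v ∈ B, (∑ u', W v u')) <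
            (∑ v ∈ B, W v u) / (∑ v, W v u) - (∑ v ∈ B, (∑ u', W v u'))), ∑ v, W v u)
        < ∑ u ∈ univ.filter (fun u : R =>
          δ' * (∑ v ∈ B, (∑ u', W v u')) <
            (∑ v ∈ B, W v u) / (∑ v, W v u) - (∑ v ∈ B, (∑ u', W v u'))), ∑ v ∈ B, W v u := by
      refine lt_of_eq_of_lt (Finset.mul_sum _ _ _) ?_
      refine Finset.sum_lt_sum (fun u hu => ?_) ?_
      · rcases (hw0 u).eq_or_lt with h0 | hpos
        · rw [← h0, mul_zero]
          exact hnB0 u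
        · exact (hpred u hu hpos).le
      · obtain ⟨u, hu, hwu⟩ := hex
        exact ⟨u, hu, hpred u hu hwu⟩
    have hscomm : (∑ u ∈ univ.filter (fun u : R =>
        δ' * (∑ v ∈ B, (∑ u', W v u')) <
          (∑ v ∈ B, W v u) / (∑ v, W v u) - (∑ v ∈ B, (∑ u', W v u'))), ∑ v ∈ B, W v u)
        = ∑ v ∈ B, ∑ u ∈ univ.filter (fun u : R =>
          δ' * (∑ v ∈ B, (∑ u', W v u')) <
            (∑ v ∈ B, W v u) / (∑ v, W v u) - (∑ v ∈ B, (∑ u', W v u'))), W v u :=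
      Finset.sum_comm
    rw [hscomm] at hstrict
    have hkey := lt_of_lt_of_le hstrict hupper
    have hSle : (∑ v ∈ B, ∑ u ∈ univ.filter (fun u : R =>
        δ' * (∑ v ∈ B, (∑ u', W v u')) <
          (∑ v ∈ B, W v u) / (∑ v, W v u) - (∑ v ∈ B, (∑ u', W v u'))), W v u)
        ≤ ∑ v ∈ B, ∑ u, W v u :=
      sum_le_sum fun v _ => sum_le_sum_of_subset_of_nonneg (subset_univ _) fun u _ _ => hW0 v u
    have hX0 : (0:ℝ) ≤ ∑ u ∈ univ.filter (fun u : R =>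
        δ' * (∑ v ∈ B, (∑ u', W v u')) <
          (∑ v ∈ B, W v u) / (∑ v, W v u) - (∑ v ∈ B, (∑ u', W v u'))), ∑ v, W v u :=
      sum_nonneg fun u _ => hw0 u
    have hXle : (1 + δ') * (∑ u ∈ univ.filter (fun u : R =>
        δ' * (∑ v ∈ B, (∑ u', W v u')) <
          (∑ v ∈ B, W v u) / (∑ v, W v u) - (∑ v ∈ B, (∑ u', W v u'))), ∑ v, W v u) < 1 := by
      nlinarith [lt_of_lt_of_le hstrict hSle, hmB]
    have hδX : (1 + δ) * (∑ u ∈ univ.filter (fun u : R =>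
        δ' * (∑ v ∈ B, (∑ u', W v u')) <
          (∑ v ∈ B, W v u) / (∑ v, W v u) - (∑ v ∈ B, (∑ u', W v u'))), ∑ v, W v u) ≤ 1 := by
      nlinarith [mul_nonneg hδ'δ.le hX0]
    have hb' : b * (1 - (1 + δ) * (∑ u ∈ univ.filter (fun u : R =>
        δ' * (∑ v ∈ B, (∑ u', W v u')) <
          (∑ v ∈ B, W v u) / (∑ v, W v u) - (∑ v ∈ B, (∑ u', W v u'))), ∑ v, W v u)) ≤
        β * (1 - (1 + δ) * (∑ u ∈ univ.filter (fun u : R =>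
        δ' * (∑ v ∈ B, (∑ u', W v u')) <
          (∑ v ∈ B, W v u) / (∑ v, W v u) - (∑ v ∈ B, (∑ u', W v u'))), ∑ v, W v u)) :=
      mul_le_mul_of_nonneg_right hbβ (by linarith)
    have hbr : (0:ℝ) ≤ (δ' - δ) * (∑ v ∈ B, ∑ u, W v u) + (1 + δ) * β := by
      have := mul_pos hδ'δ hmB
      have := mul_pos h1δ hβ
      linarith
    have habr := mul_le_mul_of_nonneg_right hcon hbr
    nlinarith [hkey, hb', habr, hB']
  -- the downward-deviating set has measure < α
  have hdn : (∑ u ∈ univ.filter (fun u : R =>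
      (∑ v ∈ B, W v u) / (∑ v, W v u) - (∑ v ∈ B, (∑ u', W v u')) <
        -(δ' * (∑ v ∈ B, (∑ u', W v u')))), (∑ v, W v u)) < α := by
    by_contra hcon
    push_neg at hcon
    obtain ⟨b, hb0, hbβ, -, hlower⟩ := main _ hcon
    have hpred : ∀ u ∈ univ.filter (fun u : R =>
        (∑ v ∈ B, W v u) / (∑ v, W v u) - (∑ v ∈ B, (∑ u', W v u')) <
          -(δ' * (∑ v ∈ B, (∑ u', W v u')))),
        (0:ℝ) < (∑ v, W v u) →
        (∑ v ∈ B, W v u) < (1 - δ') * (∑ v ∈ B, ∑ u', W v u') * (∑ v, W v u) := by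
      intro u hu hwu
      have h := (mem_filter.mp hu).2
      have h2 : (∑ v ∈ B, W v u) / (∑ v, W v u) < (1 - δ') * (∑ v ∈ B, ∑ u', W v u') := by
        linarith
      have h3 := (div_lt_iff₀ hwu).mp h2
      linarith [h3]
    have hex : ∃ u ∈ univ.filter (fun u : R =>
        (∑ v ∈ B, W v u) / (∑ v, W v u) - (∑ v ∈ B, (∑ u', W v u')) <
          -(δ' * (∑ v ∈ B, (∑ u', W v u')))),
        (0:ℝ) < ∑ v, W v u := by
      apply Finset.exists_lt_of_sum_lt
      rw [sum_const_zero]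
      exact lt_of_lt_of_le hα0 hcon
    have hstrict : (∑ u ∈ univ.filter (fun u : R =>
        (∑ v ∈ B, W v u) / (∑ v, W v u) - (∑ v ∈ B, (∑ u', W v u')) <
          -(δ' * (∑ v ∈ B, (∑ u', W v u')))), ∑ v ∈ B, W v u) <
        (1 - δ') * (∑ v ∈ B, ∑ u, W v u) * (∑ u ∈ univ.filter (fun u : R =>
        (∑ v ∈ B, W v u) / (∑ v, W v u) - (∑ v ∈ B, (∑ u', W v u')) <
          -(δ' * (∑ v ∈ B, (∑ u', W v u')))), ∑ v, W v u) := by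
      refine lt_of_lt_of_eq ?_ (Finset.mul_sum _ _ _).symm
      refine Finset.sum_lt_sum (fun u hu => ?_) ?_
      · rcases (hw0 u).eq_or_lt with h0 | hpos
        · rw [← h0, mul_zero]
          exact le_trans (hnBw u) h0.symm.le
        · exact (hpred u hu hpos).le
      · obtain ⟨u, hu, hwu⟩ := hex
        exact ⟨u, hu, hpred u hu hwu⟩
    have hscomm : (∑ u ∈ univ.filter (fun u : R =>
        (∑ v ∈ B, W v u) / (∑ v, W v u) - (∑ v ∈ B, (∑ u', W v u')) <
          -(δ' * (∑ v ∈ B, (∑ u', W v u')))), ∑ v ∈ B, W v u)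
        = ∑ v ∈ B, ∑ u ∈ univ.filter (fun u : R =>
        (∑ v ∈ B, W v u) / (∑ v, W v u) - (∑ v ∈ B, (∑ u', W v u')) <
          -(δ' * (∑ v ∈ B, (∑ u', W v u')))), W v u :=
      Finset.sum_comm
    rw [hscomm] at hstrict
    have hkey := lt_of_le_of_lt hlower hstrict
    have hX : (0:ℝ) < ∑ u ∈ univ.filter (fun u : R =>
        (∑ v ∈ B, W v u) / (∑ v, W v u) - (∑ v ∈ B, (∑ u', W v u')) <
          -(δ' * (∑ v ∈ B, (∑ u', W v u')))), ∑ v, W v u := lt_of_lt_of_le hα0 hcon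
    have hS0 : (0:ℝ) ≤ ∑ v ∈ B, ∑ u ∈ univ.filter (fun u : R =>
        (∑ v ∈ B, W v u) / (∑ v, W v u) - (∑ v ∈ B, (∑ u', W v u')) <
          -(δ' * (∑ v ∈ B, (∑ u', W v u')))), W v u :=
      sum_nonneg fun v _ => sum_nonneg fun u _ => hW0 v u
    have hδ'1 : δ' < 1 := by
      nlinarith [lt_of_le_of_lt hS0 hstrict, mul_pos hmB hX]
    have hdiv : (1 - δ) * ((∑ v ∈ B, ∑ u, W v u) - b) <
        (1 - δ') * (∑ v ∈ B, ∑ u, W v u) := by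
      have h2 : (∑ u ∈ univ.filter (fun u : R =>
          (∑ v ∈ B, W v u) / (∑ v, W v u) - (∑ v ∈ B, (∑ u', W v u')) <
            -(δ' * (∑ v ∈ B, (∑ u', W v u')))), ∑ v, W v u) *
            ((1 - δ) * ((∑ v ∈ B, ∑ u, W v u) - b)) <
          (∑ u ∈ univ.filter (fun u : R =>
          (∑ v ∈ B, W v u) / (∑ v, W v u) - (∑ v ∈ B, (∑ u', W v u')) <
            -(δ' * (∑ v ∈ B, (∑ u', W v u')))), ∑ v, W v u) *
            ((1 - δ') * (∑ v ∈ B, ∑ u, W v u)) := by nlinarith [hkey]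
      exact lt_of_mul_lt_mul_left h2 hX.le
    have h1δ2 : (0:ℝ) ≤ 1 - δ := by linarith
    have hfin : (δ' - δ) * (∑ v ∈ B, ∑ u, W v u) < (1 - δ) * β := by
      nlinarith [mul_le_mul_of_nonneg_left hbβ h1δ2]
    nlinarith [mul_lt_mul_of_pos_left hfin hα0, hB',
      mul_pos hβ (show (0:ℝ) < 1 - 2*α by linarith)]
  -- put the two pieces together
  have hsplit : (univ.filter (fun u : R =>
      δ' * (∑ v ∈ B, (∑ u', W v u')) <
        |(∑ v ∈ B, W v u) / (∑ v, W v u) - (∑ v ∈ B, (∑ u', W v u'))|)) =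
      (univ.filter (fun u : R =>
        δ' * (∑ v ∈ B, (∑ u', W v u')) <
          (∑ v ∈ B, W v u) / (∑ v, W v u) - (∑ v ∈ B, (∑ u', W v u')))) ∪
      (univ.filter (fun u : R =>
        (∑ v ∈ B, W v u) / (∑ v, W v u) - (∑ v ∈ B, (∑ u', W v u')) <
          -(δ' * (∑ v ∈ B, (∑ u', W v u'))))) := by
    ext u
    simp only [mem_filter, mem_union, mem_univ, true_and]
    rw [lt_abs]
    constructor
    · rintro (h | h)
      · exact Or.inl h
      · exact Or.inr (by linarith)
    · rintro (h | h)
      · exact Or.inl h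
      · exact Or.inr (by linarith)
  have hdisj : Disjoint (univ.filter (fun u : R =>
      δ' * (∑ v ∈ B, (∑ u', W v u')) <
        (∑ v ∈ B, W v u) / (∑ v, W v u) - (∑ v ∈ B, (∑ u', W v u'))))
      (univ.filter (fun u : R =>
        (∑ v ∈ B, W v u) / (∑ v, W v u) - (∑ v ∈ B, (∑ u', W v u')) <
          -(δ' * (∑ v ∈ B, (∑ u', W v u'))))) := by
    rw [Finset.disjoint_left]
    intro u hu1 hu2
    have h1 := (mem_filter.mp hu1).2
    have h2 := (mem_filter.mp hu2).2
    have h3 : (0:ℝ) < δ' * (∑ v ∈ B, ∑ u', W v u') := mul_pos (by linarith) hmB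
    linarith
  rw [hsplit, sum_union hdisj]
  linarith [hup, hdn]
end

section
/- Let f : V → ℝ_{≥0} be a nonnegative function on a finite probability space with E[f] > 0, let ε > 0, and set η = E[f^{1+ε}] / E[f]^{1+ε}. Then E[f · 1_{f > (4η)^{2(1+ε)/ε} · E[f]}] ≤ E[f] / (4η). -/
open Finset
open scoped Classical

/-- For a nonnegative function `f` on a finite probability space with
`E[f] > 0`, `ε > 0` and `η = E[f^{1+ε}]/E[f]^{1+ε}`, the mass of `f` above the threshold
`(4η)^{2(1+ε)/ε}·E[f]` is at most `E[f]/(4η)`. -/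
theorem stmt_8 {V : Type*} [Fintype V] (w : V → ℝ)
    (hw0 : ∀ v, 0 ≤ w v) (hw1 : (∑ v, w v) = 1)
    (f : V → ℝ) (hf0 : ∀ v, 0 ≤ f v) (ε : ℝ) (hε : 0 < ε)
    (hEf : 0 < (∑ v, w v * f v))
    (η : ℝ) (hη : η = (∑ v, w v * f v ^ (1 + ε)) / (∑ v, w v * f v) ^ (1 + ε)) :
    (∑ v ∈ univ.filter
        (fun v => (4 * η) ^ (2 * (1 + ε) / ε) * (∑ v', w v' * f v') < f v),
      w v * f v) ≤ (∑ v, w v * f v) / (4 * η) := by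
  set E : ℝ := ∑ v, w v * f v with hE
  set M : ℝ := ∑ v, w v * f v ^ (1 + ε) with hM
  have h1ε : (1:ℝ) ≤ 1 + ε := by linarith
  have hEpow : (0:ℝ) < E ^ (1 + ε) := Real.rpow_pos_of_pos hEf _
  -- Jensen: E^(1+ε) ≤ M
  have hJensen : E ^ (1 + ε) ≤ M := by
    have := (convexOn_rpow h1ε).map_sum_le (t := univ) (w := w) (p := f)
      (fun i _ => hw0 i) hw1 (fun i _ => hf0 i)
    simpa [smul_eq_mul] using this
  have hη1 : (1:ℝ) ≤ η := by
    rw [hη]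
    rw [le_div_iff₀ hEpow]
    simpa using hJensen
  have hηpos : (0:ℝ) < η := lt_of_lt_of_le one_pos hη1
  have h4η : (4:ℝ) ≤ 4 * η := by nlinarith
  have h4ηpos : (0:ℝ) < 4 * η := by linarith
  have hMeq : M = η * E ^ (1 + ε) := by
    rw [hη]; field_simp
  set T : ℝ := (4 * η) ^ (2 * (1 + ε) / ε) * E with hT
  have hbase1 : (1:ℝ) ≤ 4 * η := by linarith
  have hexp_pos : 0 < 2 * (1 + ε) / ε := by positivity
  have hpow1 : (1:ℝ) ≤ (4 * η) ^ (2 * (1 + ε) / ε) :=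
    Real.one_le_rpow hbase1 hexp_pos.le
  have hTpos : 0 < T := by
    have : (0:ℝ) < (4 * η) ^ (2 * (1 + ε) / ε) := Real.rpow_pos_of_pos h4ηpos _
    exact mul_pos this hEf
  have hTε : T ^ ε = (4 * η) ^ (2 * (1 + ε)) * E ^ ε := by
    rw [hT, Real.mul_rpow (by positivity) hEf.le, ← Real.rpow_mul h4ηpos.le,
      div_mul_cancel₀ _ hε.ne']
  -- Markov-type bound
  set S := univ.filter
      (fun v => (4 * η) ^ (2 * (1 + ε) / ε) * (∑ v', w v' * f v') < f v) with hS
  have hstep : (∑ v ∈ S, w v * f v) ≤ M / T ^ ε := by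
    have hTεpos : 0 < T ^ ε := Real.rpow_pos_of_pos hTpos _
    rw [le_div_iff₀ hTεpos, sum_mul]
    have h1 : ∀ v ∈ S, w v * f v * T ^ ε ≤ w v * f v ^ (1 + ε) := by
      intro v hv
      rw [hS, mem_filter] at hv
      have hfv : T < f v := hv.2
      have hfvpos : 0 < f v := lt_trans hTpos hfv
      have : T ^ ε ≤ f v ^ ε := Real.rpow_le_rpow hTpos.le hfv.le hε.le
      calc w v * f v * T ^ ε ≤ w v * f v * f v ^ ε := by
            apply mul_le_mul_of_nonneg_left this (mul_nonneg (hw0 v) (hf0 v))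
        _ = w v * f v ^ (1 + ε) := by
            rw [mul_assoc, ← Real.rpow_one_add' hfvpos.le (by positivity)]
    calc ∑ v ∈ S, w v * f v * T ^ ε ≤ ∑ v ∈ S, w v * f v ^ (1 + ε) :=
          sum_le_sum h1
      _ ≤ M := by
          apply sum_le_sum_of_subset_of_nonneg (subset_univ S)
          intro v _ _
          exact mul_nonneg (hw0 v) (Real.rpow_nonneg (hf0 v) _)
  -- Final arithmetic
  have hE1ε : E ^ (1 + ε) = E * E ^ ε := by
    rw [Real.rpow_one_add' hEf.le (by positivity)]
  have hfinal : M / T ^ ε ≤ E / (4 * η) := by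
    rw [hMeq, hTε, hE1ε]
    rw [div_le_div_iff₀ (by positivity) h4ηpos]
    have key : η * (4 * η) ≤ (4 * η) ^ (2 * (1 + ε)) := by
      have h2 : (4 * η) ^ (2:ℝ) ≤ (4 * η) ^ (2 * (1 + ε)) :=
        Real.rpow_le_rpow_of_exponent_le hbase1 (by nlinarith)
      have h3 : η * (4 * η) ≤ (4 * η) ^ (2:ℝ) := by
        rw [Real.rpow_two]; nlinarith
      linarith
    have hEεpos : 0 < E ^ ε := Real.rpow_pos_of_pos hEf _
    calc η * (E * E ^ ε) * (4 * η) = (η * (4 * η)) * (E * E ^ ε) := by ring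
      _ ≤ (4 * η) ^ (2 * (1 + ε)) * (E * E ^ ε) := by
          apply mul_le_mul_of_nonneg_right key (by positivity)
      _ = E * ((4 * η) ^ (2 * (1 + ε)) * E ^ ε) := by ring
  exact le_trans hstep hfinal
end

section
/- Let (s, r) be a random pair where r is distributed, conditionally on s, as a uniformly random sub-object of s, and let f(r) and Y(s) = E[f(r) | s] be real-valued with common mean μ. Suppose that for every value of s, Pr[f(r) - Y(s) < -t/2 | s] ≤ π for some π < 1. Then Pr[f(r) - μ > t/2] ≥ (1 - π) · Pr[Y(s) - μ > t]. Consequently, if Pr[f(r) - μ > t/2] ≤ u(t/2) for some function u, then Pr[Y(s) - μ > t] ≤ u(t/2)·(1-π)^{-1}. -/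
open Finset
open scoped Classical

/-- abstract raising-concentration lemma: Let `s` be drawn with weights `wS`
and, conditionally on `s`, let `r` be drawn according to the kernel `K s`.  Let
`Y s = E[f(r) | s]`, and let `μ` be the common mean of `f` and `Y`.  If for every `s`,
`Pr[f(r) - Y(s) < -t/2 | s] ≤ π` with `π < 1`, then
`Pr[f(r) - μ > t/2] ≥ (1-π)·Pr[Y(s) - μ > t]`; consequently, if
`Pr[f(r) - μ > t/2] ≤ u` then `Pr[Y(s) - μ > t] ≤ u·(1-π)⁻¹`. -/
theorem stmt_17 {S R : Type*} [Fintype S] [Fintype R]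
    (wS : S → ℝ) (hwS0 : ∀ s, 0 ≤ wS s) (hwS1 : (∑ s, wS s) = 1)
    (K : S → R → ℝ) (hK0 : ∀ s r, 0 ≤ K s r) (hK1 : ∀ s, (∑ r, K s r) = 1)
    (f : R → ℝ) (μ t π : ℝ) (hπ : π < 1)
    (hμf : (∑ r, (∑ s, wS s * K s r) * f r) = μ)
    (hμY : (∑ s, wS s * (∑ r, K s r * f r)) = μ)
    (hcond : ∀ s, (∑ r ∈ univ.filter
        (fun r => f r - (∑ r', K s r' * f r') < -t / 2), K s r) ≤ π) :
    (1 - π) * (∑ s ∈ univ.filter (fun s => t < (∑ r, K s r * f r) - μ), wS s)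
      ≤ (∑ r ∈ univ.filter (fun r => t / 2 < f r - μ), (∑ s, wS s * K s r)) ∧
    ∀ u : ℝ, (∑ r ∈ univ.filter (fun r => t / 2 < f r - μ), (∑ s, wS s * K s r)) ≤ u →
      (∑ s ∈ univ.filter (fun s => t < (∑ r, K s r * f r) - μ), wS s) ≤ u * (1 - π)⁻¹ := by
  set A : Finset R := univ.filter (fun r => t / 2 < f r - μ) with hA
  set B : Finset S := univ.filter (fun s => t < (∑ r, K s r * f r) - μ) with hB
  have hmain : (1 - π) * (∑ s ∈ B, wS s) ≤ ∑ r ∈ A, (∑ s, wS s * K s r) := by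
    have hswap : (∑ r ∈ A, (∑ s, wS s * K s r))
        = ∑ s, wS s * (∑ r ∈ A, K s r) := by
      rw [Finset.sum_comm]
      simp [Finset.mul_sum]
    rw [hswap]
    have hstep1 : ∑ s ∈ B, wS s * (1 - π) ≤ ∑ s ∈ B, wS s * (∑ r ∈ A, K s r) := by
      apply Finset.sum_le_sum
      intro s hs
      have hsB : t < (∑ r, K s r * f r) - μ := by
        simpa [hB] using hs
      apply mul_le_mul_of_nonneg_left _ (hwS0 s)
      -- complement of the bad set
      set C : Finset R := univ.filter (fun r => f r - (∑ r', K s r' * f r') < -t / 2)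
        with hC
      have hCsub : Cᶜ ⊆ A := by
        intro r hr
        simp only [hC, Finset.mem_compl, Finset.mem_filter, Finset.mem_univ,
          true_and, not_lt] at hr
        simp only [hA, Finset.mem_filter, Finset.mem_univ, true_and]
        linarith
      have h1 : ∑ r ∈ Cᶜ, K s r ≤ ∑ r ∈ A, K s r :=
        Finset.sum_le_sum_of_subset_of_nonneg hCsub (fun r _ _ => hK0 s r)
      have h2 : (∑ r ∈ Cᶜ, K s r) = 1 - ∑ r ∈ C, K s r := by
        have := Finset.sum_add_sum_compl C (K s)
        rw [hK1 s] at this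
        linarith
      have := hcond s
      rw [← hC] at this
      linarith
    calc (1 - π) * (∑ s ∈ B, wS s) = ∑ s ∈ B, wS s * (1 - π) := by
          rw [Finset.mul_sum]; congr 1; ext s; ring
      _ ≤ ∑ s ∈ B, wS s * (∑ r ∈ A, K s r) := hstep1
      _ ≤ ∑ s, wS s * (∑ r ∈ A, K s r) := by
          apply Finset.sum_le_sum_of_subset_of_nonneg (Finset.subset_univ B)
          intro s _ _
          exact mul_nonneg (hwS0 s) (Finset.sum_nonneg fun r _ => hK0 s r)
  refine ⟨hmain, fun u hu => ?_⟩
  have h1π : (0:ℝ) < 1 - π := by linarith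
  have h2 : (1 - π) * (∑ s ∈ B, wS s) ≤ u := hmain.trans hu
  rw [← div_eq_mul_inv, le_div_iff₀ h1π]
  nlinarith
end
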